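/- arXiv:2310.14869 — 7 statements merged into one kernel-verified Lean document; each statement's English description precedes it below -/
import Mathlib

section
/- In the field ℚ_p of p-adic numbers, the series Σ_{i=0}^{∞} α_i p^i converges and its sum equals c/d; that is, the sequence (α_i) is the sequence of digits of the p-adic expansion of c/d. -/
/-! The recurrence telescopes to `d · ∑_{i<n} α_i p^i = c - β_n p^n`. As `β_n` is an integer,
the error term `β_n p^n / d` has `p`-adic norm at most `p^(-n)`, because `|d|_p = 1`. -/

open Filter Topology Finset

theorem mul_sum_range_mul_pow_eq_sub {R : Type*} [CommRing R] {p d : R} {α β : ℕ → R}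
    (hβ : ∀ i, p * β (i + 1) = β i - α i * d) (n : ℕ) :
    d * ∑ i ∈ range n, α i * p ^ i = β 0 - β n * p ^ n := by
  induction n with
  | zero => simp
  | succ n ih =>
    rw [sum_range_succ, mul_add, ih]
    linear_combination p ^ n * hβ n

namespace Padic
variable {p : ℕ} [Fact p.Prime]

theorem norm_intCast_mul_p_pow_le (a : ℤ) (n : ℕ) :
    ‖(a : ℚ_[p]) * (p : ℚ_[p]) ^ n‖ ≤ (p : ℝ)⁻¹ ^ n := by
  rw [norm_mul, norm_pow, norm_p]
  exact mul_le_of_le_one_left (by positivity) (norm_int_le_one a)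

theorem tendsto_intCast_mul_p_pow (a : ℕ → ℤ) :
    Tendsto (fun n => (a n : ℚ_[p]) * (p : ℚ_[p]) ^ n) atTop (𝓝 0) :=
  squeeze_zero_norm (fun n => norm_intCast_mul_p_pow_le (a n) n) <|
    tendsto_pow_atTop_nhds_zero_of_lt_one (by positivity) <|
      inv_lt_one_of_one_lt₀ (mod_cast (Fact.out : p.Prime).one_lt)

theorem summable_intCast_mul_p_pow (a : ℕ → ℤ) :
    Summable fun n => (a n : ℚ_[p]) * (p : ℚ_[p]) ^ n :=
  NonarchimedeanAddGroup.summable_of_tendsto_cofinite_zero <| by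
    simpa only [Nat.cofinite_eq_atTop] using tendsto_intCast_mul_p_pow a

end Padic

theorem stmt_3_general (p : ℕ) [hp : Fact p.Prime] (c d : ℕ) (hdp : Nat.Coprime d p)
    (α β : ℕ → ℤ) (hβ0 : β 0 = (c : ℤ))
    (hβ : ∀ i, (p : ℤ) * β (i + 1) = β i - α i * (d : ℤ)) :
    HasSum (fun i : ℕ => (α i : ℚ_[p]) * (p : ℚ_[p]) ^ i) ((c : ℚ_[p]) / (d : ℚ_[p])) := by
  have hd0 : (d : ℚ_[p]) ≠ 0 :=
    norm_ne_zero_iff.mp <| (Padic.norm_natCast_eq_one_iff.mpr hdp.symm).trans_ne one_ne_zero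
  have partial_sum (n : ℕ) : ∑ i ∈ range n, (α i : ℚ_[p]) * (p : ℚ_[p]) ^ i
      = ((c : ℚ_[p]) - (β n : ℚ_[p]) * (p : ℚ_[p]) ^ n) / d := by
    have hβ' (i : ℕ) : (p : ℚ_[p]) * β (i + 1) = β i - α i * d := by exact_mod_cast hβ i
    rw [eq_div_iff hd0, mul_comm, mul_sum_range_mul_pow_eq_sub (β := fun i => (β i : ℚ_[p])) hβ',
      hβ0, Int.cast_natCast]
  rw [(Padic.summable_intCast_mul_p_pow α).hasSum_iff_tendsto_nat, funext partial_sum]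
  simpa using ((Padic.tendsto_intCast_mul_p_pow β).const_sub (c : ℚ_[p])).div_const (d : ℚ_[p])

/-- In ℚ_p, the series Σ α_i p^i converges with sum c/d: the α_i are the digits
of the p-adic expansion of c/d. -/
theorem stmt_3 (p : ℕ) [hp : Fact p.Prime] (c d : ℕ) (hc : 0 < c) (hd : 0 < d)
    (hcd : Nat.Coprime c d) (hcp : Nat.Coprime c p) (hdp : Nat.Coprime d p)
    (α β : ℕ → ℤ) (hβ0 : β 0 = (c : ℤ))
    (hα : ∀ i, 0 ≤ α i ∧ α i ≤ (p : ℤ) - 1 ∧ α i * (d : ℤ) ≡ β i [ZMOD (p : ℤ)])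
    (hβ : ∀ i, (p : ℤ) * β (i + 1) = β i - α i * (d : ℤ)) :
    HasSum (fun i : ℕ => (α i : ℚ_[p]) * (p : ℚ_[p]) ^ i) ((c : ℚ_[p]) / (d : ℚ_[p])) :=
  stmt_3_general p (hp := hp) c d hdp α β hβ0 hβ
end

section
/- (Main theorem, Case 1.) If c < d, then |β_i| < d for every i ≥ 0. -/
/-- Main theorem, Case 1: if c < d then |β_i| < d for every i. -/
theorem stmt_6 (p : ℕ) (hp : p.Prime) (c d : ℕ) (hc : 0 < c) (hd : 0 < d)
    (hcd : Nat.Coprime c d) (hcp : Nat.Coprime c p) (hdp : Nat.Coprime d p)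
    (α β : ℕ → ℤ) (hβ0 : β 0 = (c : ℤ))
    (hα : ∀ i, 0 ≤ α i ∧ α i ≤ (p : ℤ) - 1 ∧ α i * (d : ℤ) ≡ β i [ZMOD (p : ℤ)])
    (hβ : ∀ i, (p : ℤ) * β (i + 1) = β i - α i * (d : ℤ))
    (hlt : c < d) :
    ∀ i : ℕ, |β i| < (d : ℤ) := by
  have hp1 : (1 : ℤ) ≤ (p : ℤ) := by exact_mod_cast hp.one_lt.le
  have hppos : (0 : ℤ) < (p : ℤ) := lt_of_lt_of_le one_pos hp1
  intro i
  induction i with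
  | zero =>
    rw [hβ0, abs_of_nonneg (by positivity)]
    exact_mod_cast hlt
  | succ i ih =>
    obtain ⟨h1, h2, _⟩ := hα i
    have hd0 : (0 : ℤ) ≤ (d : ℤ) := by positivity
    have hbound : |(p : ℤ) * β (i + 1)| < (p : ℤ) * (d : ℤ) := by
      rw [hβ i]
      calc |β i - α i * (d : ℤ)| ≤ |β i| + |α i * (d : ℤ)| := abs_sub _ _
        _ = |β i| + α i * (d : ℤ) := by rw [abs_of_nonneg (mul_nonneg h1 hd0)]
        _ < (d : ℤ) + ((p : ℤ) - 1) * (d : ℤ) := by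
            have : α i * (d : ℤ) ≤ ((p : ℤ) - 1) * (d : ℤ) :=
              mul_le_mul_of_nonneg_right h2 hd0
            linarith
        _ = (p : ℤ) * (d : ℤ) := by ring
    rw [abs_mul, abs_of_pos hppos] at hbound
    exact lt_of_mul_lt_mul_left hbound (le_of_lt hppos)
end

section
/- (Main theorem, Case 2.1.) If p ≥ 3, c > d, and c·(p−1) < 2·d·p (i.e., 0 < c(p−1)/(2dp) < 1), then |β_i| < d for every i ≥ 1. -/
/-- Main theorem, Case 2.1: if p ≥ 3, c > d and c(p−1) < 2dp, then |β_i| < d for every i ≥ 1. -/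
theorem stmt_7 (p : ℕ) (hp : p.Prime) (c d : ℕ) (hc : 0 < c) (hd : 0 < d)
    (hcd : Nat.Coprime c d) (hcp : Nat.Coprime c p) (hdp : Nat.Coprime d p)
    (α β : ℕ → ℤ) (hβ0 : β 0 = (c : ℤ))
    (hα : ∀ i, 0 ≤ α i ∧ α i ≤ (p : ℤ) - 1 ∧ α i * (d : ℤ) ≡ β i [ZMOD (p : ℤ)])
    (hβ : ∀ i, (p : ℤ) * β (i + 1) = β i - α i * (d : ℤ))
    (hp3 : 3 ≤ p) (hcd' : d < c) (hsmall : c * (p - 1) < 2 * d * p) :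
    ∀ i : ℕ, 1 ≤ i → |β i| < (d : ℤ) := by
  obtain ⟨q, rfl⟩ : ∃ q, p = q + 3 := ⟨p - 3, by omega⟩
  have hcdp : c < d * (q + 3) := by
    have h : c * (q + 3 - 1) < 2 * d * (q + 3) := hsmall
    have h' : c * (q + 2) < 2 * d * (q + 3) := by
      have : q + 3 - 1 = q + 2 := by omega
      rwa [this] at h
    nlinarith [Nat.zero_le (d * q * q), Nat.zero_le (d * q)]
  have hpZ : (0 : ℤ) < (q : ℤ) + 3 := by positivity
  have step : ∀ i, -(d : ℤ) < β i → β i < (d : ℤ) * ((q : ℤ) + 3) → |β (i + 1)| < d := by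
    intro i h1 h2
    obtain ⟨ha0, ha1, -⟩ := hα i
    have hrec := hβ i
    have hdZ : (0 : ℤ) < (d : ℤ) := by exact_mod_cast hd
    rw [abs_lt]
    push_cast at hrec ha1 ⊢
    constructor
    · nlinarith [mul_le_mul_of_nonneg_right ha1 hdZ.le]
    · nlinarith [mul_nonneg ha0 hdZ.le]
  intro i hi
  induction i with
  | zero => omega
  | succ n ih =>
    rcases Nat.eq_zero_or_pos n with rfl | hn
    · apply step 0
      · rw [hβ0]; have : (0:ℤ) < c := by exact_mod_cast hc
        have : (0:ℤ) < d := by exact_mod_cast hd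
        push_cast; nlinarith [hc]
      · rw [hβ0]; push_cast; exact_mod_cast hcdp
    · have h := ih hn
      rw [abs_lt] at h
      apply step n h.1
      have hdZ : (0 : ℤ) < (d : ℤ) := by exact_mod_cast hd
      nlinarith [h.2]
end

section
/- (Main theorem, Case 2.2, initial segment.) If p ≥ 3, c > d, c·(p−1) > 2·d·p, and m = ⌊log(c(p−1)/(2dp))/log p⌋, then for every i with 0 ≤ i ≤ m one has β_i > 0 and d ≤ β_i ≤ c. -/
set_option maxHeartbeats 1600000 in
/-- Main theorem, Case 2.2, initial segment: if p ≥ 3, c > d and c(p−1) > 2dp, and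
m = ⌊log(c(p−1)/(2dp)) / log p⌋, then β_i > 0 and d ≤ β_i ≤ c for 0 ≤ i ≤ m. -/
theorem stmt_8 (p : ℕ) (hp : p.Prime) (c d : ℕ) (hc : 0 < c) (hd : 0 < d)
    (hcd : Nat.Coprime c d) (hcp : Nat.Coprime c p) (hdp : Nat.Coprime d p)
    (α β : ℕ → ℤ) (hβ0 : β 0 = (c : ℤ))
    (hα : ∀ i, 0 ≤ α i ∧ α i ≤ (p : ℤ) - 1 ∧ α i * (d : ℤ) ≡ β i [ZMOD (p : ℤ)])
    (hβ : ∀ i, (p : ℤ) * β (i + 1) = β i - α i * (d : ℤ))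
    (hp3 : 3 ≤ p) (hcd' : d < c) (hbig : 2 * d * p < c * (p - 1))
    (m : ℕ)
    (hm : (m : ℤ) = ⌊Real.log ((c : ℝ) * ((p : ℝ) - 1) / (2 * (d : ℝ) * (p : ℝ))) /
      Real.log (p : ℝ)⌋) :
    ∀ i : ℕ, i ≤ m → 0 < β i ∧ (d : ℤ) ≤ β i ∧ β i ≤ (c : ℤ) := by
  have hp1R : (1:ℝ) < (p:ℝ) := by exact_mod_cast lt_of_lt_of_le (by norm_num) hp3
  have hdR : (0:ℝ) < (d:ℝ) := by exact_mod_cast hd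
  have hcR : (0:ℝ) < (c:ℝ) := by exact_mod_cast hc
  have hden : (0:ℝ) < 2*(d:ℝ)*(p:ℝ) := by positivity
  have hX : (0:ℝ) < (c:ℝ) * ((p:ℝ)-1) / (2*(d:ℝ)*(p:ℝ)) := by
    apply div_pos (by nlinarith) hden
  have hlogp : 0 < Real.log (p:ℝ) := Real.log_pos hp1R
  have hmle : (m:ℝ) ≤ Real.log ((c:ℝ) * ((p:ℝ)-1) / (2*(d:ℝ)*(p:ℝ))) / Real.log (p:ℝ) := by
    have h := Int.floor_le (Real.log ((c:ℝ) * ((p:ℝ)-1) / (2*(d:ℝ)*(p:ℝ))) / Real.log (p:ℝ))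
    rw [← hm] at h
    exact_mod_cast h
  have h2 : (p:ℝ)^m ≤ (c:ℝ) * ((p:ℝ)-1) / (2*(d:ℝ)*(p:ℝ)) := by
    have hmul : (m:ℝ) * Real.log (p:ℝ) ≤
        Real.log ((c:ℝ) * ((p:ℝ)-1) / (2*(d:ℝ)*(p:ℝ))) := by
      rw [← le_div_iff₀ hlogp]; exact hmle
    have hlog : Real.log ((p:ℝ)^m) ≤
        Real.log ((c:ℝ) * ((p:ℝ)-1) / (2*(d:ℝ)*(p:ℝ))) := by
      rw [Real.log_pow]; exact_mod_cast hmul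
    exact (Real.log_le_log_iff (pow_pos (by linarith) m) hX).mp hlog
  have hkeyR : 2*(d:ℝ)*(p:ℝ)*(p:ℝ)^m ≤ (c:ℝ)*((p:ℝ)-1) := by
    rw [le_div_iff₀ hden] at h2; linarith
  have hkeyZ : 2*(d:ℤ)*(p:ℤ)*(p:ℤ)^m ≤ (c:ℤ)*((p:ℤ)-1) := by exact_mod_cast hkeyR
  have hpZ : (0:ℤ) < (p:ℤ) := by exact_mod_cast hp.pos
  have hdZ : (0:ℤ) < (d:ℤ) := by exact_mod_cast hd
  have H : ∀ i, i ≤ m → (p:ℤ)^i * β i ≤ (c:ℤ) ∧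
      (c:ℤ) + d ≤ (p:ℤ)^i * β i + d * (p:ℤ)^i := by
    intro i
    induction i with
    | zero => intro _; simp [hβ0]
    | succ n ih =>
      intro hle
      obtain ⟨h1, h2⟩ := ih (by omega)
      obtain ⟨ha0, ha1, _⟩ := hα n
      have hrec := hβ n
      have hpow : (0:ℤ) < (p:ℤ)^n := pow_pos hpZ n
      have heq : (p:ℤ)^(n+1) * β (n+1) = (p:ℤ)^n * ((p:ℤ) * β (n+1)) := by ring
      have hb : (p:ℤ)^n * (α n * d) ≤ (p:ℤ)^n * (((p:ℤ)-1)*d) :=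
        mul_le_mul_of_nonneg_left (mul_le_mul_of_nonneg_right ha1 hdZ.le) hpow.le
      have hnn : (0:ℤ) ≤ (p:ℤ)^n * (α n * d) :=
        mul_nonneg hpow.le (mul_nonneg ha0 hdZ.le)
      constructor
      · rw [heq, hrec]; nlinarith
      · rw [heq, hrec, pow_succ]; nlinarith
  intro i hi
  obtain ⟨h1, h2⟩ := H i hi
  have hpow : (0:ℤ) < (p:ℤ)^i := pow_pos hpZ i
  have hone : (1:ℤ) ≤ (p:ℤ)^i := hpow
  have hmono : (p:ℤ)^i ≤ (p:ℤ)^m := pow_le_pow_right₀ (by linarith) hi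
  have hcZ : (0:ℤ) < (c:ℤ) := by exact_mod_cast hc
  have hm1 : 2*(d:ℤ)*(p:ℤ)^m < c := by
    by_contra hcon
    push_neg at hcon
    have : (c:ℤ) * p ≤ 2*(d:ℤ)*(p:ℤ)^m * p :=
      mul_le_mul_of_nonneg_right hcon hpZ.le
    have e1 : 2*(d:ℤ)*(p:ℤ)*(p:ℤ)^m = 2*(d:ℤ)*(p:ℤ)^m*(p:ℤ) := by ring
    have e2 : (c:ℤ)*((p:ℤ)-1) = (c:ℤ)*(p:ℤ) - c := by ring
    linarith
  have hci : 2*(d:ℤ)*(p:ℤ)^i < c := by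
    have := mul_le_mul_of_nonneg_left hmono (by positivity : (0:ℤ) ≤ 2*(d:ℤ))
    nlinarith
  have hdb : (d:ℤ) < β i := by
    have hlt : (p:ℤ)^i * (d:ℤ) < (p:ℤ)^i * β i := by nlinarith
    exact lt_of_mul_lt_mul_left hlt hpow.le
  refine ⟨by linarith, hdb.le, ?_⟩
  nlinarith
end

section
/- (Main theorem, Case 2.2, tail.) If p ≥ 3, c > d, c·(p−1) > 2·d·p, and m = ⌊log(c(p−1)/(2dp))/log p⌋, then for every i ≥ m+2 one has |β_i| ≤ d. -/
/-- Main theorem, Case 2.2, tail: if p ≥ 3, c > d and c(p−1) > 2dp, and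
m = ⌊log(c(p−1)/(2dp)) / log p⌋, then |β_i| ≤ d for every i ≥ m + 2. -/
theorem stmt_9 (p : ℕ) (hp : p.Prime) (c d : ℕ) (hc : 0 < c) (hd : 0 < d)
    (hcd : Nat.Coprime c d) (hcp : Nat.Coprime c p) (hdp : Nat.Coprime d p)
    (α β : ℕ → ℤ) (hβ0 : β 0 = (c : ℤ))
    (hα : ∀ i, 0 ≤ α i ∧ α i ≤ (p : ℤ) - 1 ∧ α i * (d : ℤ) ≡ β i [ZMOD (p : ℤ)])
    (hβ : ∀ i, (p : ℤ) * β (i + 1) = β i - α i * (d : ℤ))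
    (hp3 : 3 ≤ p) (hcd' : d < c) (hbig : 2 * d * p < c * (p - 1))
    (m : ℕ)
    (hm : (m : ℤ) = ⌊Real.log ((c : ℝ) * ((p : ℝ) - 1) / (2 * (d : ℝ) * (p : ℝ))) /
      Real.log (p : ℝ)⌋) :
    ∀ i : ℕ, m + 2 ≤ i → |β i| ≤ (d : ℤ) := by
  have hpZ : (0:ℤ) < (p:ℤ) := by exact_mod_cast hp.pos
  -- Lemma A : -d ≤ β i for all i
  have hlow : ∀ i, -(d:ℤ) ≤ β i := by
    intro i
    induction i with
    | zero => rw [hβ0]; nlinarith [hd, hc]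
    | succ n ih =>
      obtain ⟨ha0, ha1, _⟩ := hα n
      have key : (p:ℤ) * (-(d:ℤ)) ≤ (p:ℤ) * β (n+1) := by
        rw [hβ n]
        nlinarith [hd]
      exact le_of_mul_le_mul_left key hpZ
  -- Lemma B : p^i * β i ≤ c
  have hup : ∀ i, (p:ℤ)^i * β i ≤ (c:ℤ) := by
    intro i
    induction i with
    | zero => simp [hβ0]
    | succ n ih =>
      obtain ⟨ha0, _, _⟩ := hα n
      have hpow : (0:ℤ) ≤ (p:ℤ)^n := by positivity
      have : (p:ℤ)^(n+1) * β (n+1) = (p:ℤ)^n * ((p:ℤ) * β (n+1)) := by ring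
      rw [this, hβ n]
      have had : 0 ≤ α n * (d:ℤ) := by positivity
      nlinarith
  -- From hm : real inequality p^(m+1) > c(p-1)/(2dp)
  have hpR : (1:ℝ) < (p:ℝ) := by exact_mod_cast lt_of_lt_of_le (by norm_num) hp3
  have hlogp : 0 < Real.log p := Real.log_pos hpR
  set X : ℝ := (c : ℝ) * ((p : ℝ) - 1) / (2 * (d : ℝ) * (p : ℝ)) with hX
  have hXpos : 0 < X := by
    apply div_pos
    · have : (1:ℝ) < (p:ℝ) := hpR
      have : (0:ℝ) < (c:ℝ) := by exact_mod_cast hc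
      nlinarith
    · have : (0:ℝ) < (d:ℝ) := by exact_mod_cast hd
      have : (0:ℝ) < (p:ℝ) := by exact_mod_cast hp.pos
      positivity
  have hfloor : Real.log X / Real.log p < (m:ℝ) + 1 := by
    have := Int.lt_floor_add_one (Real.log X / Real.log p)
    rw [← hm] at this
    exact_mod_cast this
  have hlogX : Real.log X < ((m:ℝ) + 1) * Real.log p := by
    rw [div_lt_iff₀ hlogp] at hfloor
    linarith
  have hppos : (0:ℝ) < (p:ℝ) := by linarith
  have hXlt : X < (p:ℝ)^(m+1) := by
    have h1 := Real.exp_lt_exp.mpr hlogX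
    rw [Real.exp_log hXpos] at h1
    have h2 : Real.exp (((m:ℝ)+1) * Real.log p) = (p:ℝ)^(m+1) := by
      rw [mul_comm, ← Real.rpow_def_of_pos hppos]
      rw [show ((m:ℝ)+1) = ((m+1:ℕ):ℝ) by push_cast; ring, Real.rpow_natCast]
    rw [h2] at h1
    exact h1
  -- deduce c < d * p^(m+2) in ℤ
  have hdR : (0:ℝ) < (d:ℝ) := by exact_mod_cast hd
  have hcR : (0:ℝ) < (c:ℝ) := by exact_mod_cast hc
  have hmain : (c:ℝ) * ((p:ℝ) - 1) < 2 * (d:ℝ) * (p:ℝ)^(m+2) := by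
    rw [hX, div_lt_iff₀ (by positivity)] at hXlt
    calc (c:ℝ) * ((p:ℝ)-1) < (p:ℝ)^(m+1) * (2*(d:ℝ)*(p:ℝ)) := hXlt
      _ = 2 * (d:ℝ) * (p:ℝ)^(m+2) := by ring
  have hcdp : (c:ℝ) < (d:ℝ) * (p:ℝ)^(m+2) := by
    have hp3R : (3:ℝ) ≤ (p:ℝ) := by exact_mod_cast hp3
    nlinarith [hmain, mul_nonneg hcR.le (by linarith : (0:ℝ) ≤ (p:ℝ) - 3)]
  have hcdpZ : (c:ℤ) < (d:ℤ) * (p:ℤ)^(m+2) := by exact_mod_cast hcdp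
  -- finish
  intro i hi
  rw [abs_le]
  refine ⟨hlow i, ?_⟩
  have hpowle : (d:ℤ) * (p:ℤ)^(m+2) ≤ (d:ℤ) * (p:ℤ)^i := by
    apply mul_le_mul_of_nonneg_left _ (by positivity)
    exact pow_le_pow_right₀ (by linarith) hi
  have : (p:ℤ)^i * β i < (p:ℤ)^i * (d:ℤ) := by
    calc (p:ℤ)^i * β i ≤ (c:ℤ) := hup i
      _ < (d:ℤ) * (p:ℤ)^(m+2) := hcdpZ
      _ ≤ (d:ℤ) * (p:ℤ)^i := hpowle
      _ = (p:ℤ)^i * (d:ℤ) := by ring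
  exact le_of_lt (lt_of_mul_lt_mul_left this (by positivity))
end

section
/- (Key step in Case 2.2.) If p ≥ 3, c > d, c·(p−1) > 2·d·p, m = ⌊log(c(p−1)/(2dp))/log p⌋, and k is an index with 1 ≤ k ≤ m such that β_k < d·p^0·p^0 holds in the sense β_k < d, then c < (2·p·d/(p−1))·p^k; consequently no index k with 1 ≤ k ≤ m satisfies β_k < d. -/
/-- Key step in Case 2.2: if 1 ≤ k ≤ m and β_k < d, then c < (2pd/(p−1))·p^k;
consequently no index k with 1 ≤ k ≤ m satisfies β_k < d. -/
theorem stmt_11 (p : ℕ) (hp : p.Prime) (c d : ℕ) (hc : 0 < c) (hd : 0 < d)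
    (hcd : Nat.Coprime c d) (hcp : Nat.Coprime c p) (hdp : Nat.Coprime d p)
    (α β : ℕ → ℤ) (hβ0 : β 0 = (c : ℤ))
    (hα : ∀ i, 0 ≤ α i ∧ α i ≤ (p : ℤ) - 1 ∧ α i * (d : ℤ) ≡ β i [ZMOD (p : ℤ)])
    (hβ : ∀ i, (p : ℤ) * β (i + 1) = β i - α i * (d : ℤ))
    (hp3 : 3 ≤ p) (hcd' : d < c) (hbig : 2 * d * p < c * (p - 1))
    (m : ℕ)
    (hm : (m : ℤ) = ⌊Real.log ((c : ℝ) * ((p : ℝ) - 1) / (2 * (d : ℝ) * (p : ℝ))) /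
      Real.log (p : ℝ)⌋) :
    (∀ k : ℕ, 1 ≤ k → k ≤ m → β k < (d : ℤ) →
        (c : ℝ) < 2 * (p : ℝ) * (d : ℝ) / ((p : ℝ) - 1) * (p : ℝ) ^ k) ∧
      ¬ ∃ k : ℕ, 1 ≤ k ∧ k ≤ m ∧ β k < (d : ℤ) := by
  have hpR : (3:ℝ) ≤ (p:ℝ) := by exact_mod_cast hp3
  have hpZ : (3:ℤ) ≤ (p:ℤ) := by exact_mod_cast hp3
  -- expansion: c = β k * p^k + d * ∑ α i p^i
  have hexp : ∀ k : ℕ, (c : ℤ) = β k * (p:ℤ)^k +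
      (d:ℤ) * ∑ i ∈ Finset.range k, α i * (p:ℤ)^i := by
    intro k
    induction k with
    | zero => simp [hβ0]
    | succ k ih =>
      have h := hβ k
      have : β k = (p:ℤ) * β (k+1) + α k * (d:ℤ) := by linarith
      rw [Finset.sum_range_succ]
      rw [ih, this]
      ring
  -- key integer bound: β k < d → c < 2 d p^k
  have key : ∀ k : ℕ, β k < (d:ℤ) → (c:ℤ) < 2 * (d:ℤ) * (p:ℤ)^k := by
    intro k hβk
    have hsum : ∑ i ∈ Finset.range k, α i * (p:ℤ)^i ≤ (p:ℤ)^k - 1 := by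
      have h1 : ∑ i ∈ Finset.range k, α i * (p:ℤ)^i ≤
          ∑ i ∈ Finset.range k, ((p:ℤ)-1) * (p:ℤ)^i := by
        apply Finset.sum_le_sum
        intro i _
        exact mul_le_mul_of_nonneg_right (hα i).2.1 (by positivity)
      have h2 : ∑ i ∈ Finset.range k, ((p:ℤ)-1) * (p:ℤ)^i = (p:ℤ)^k - 1 := by
        have := geom_sum_mul (p:ℤ) k
        calc ∑ i ∈ Finset.range k, ((p:ℤ)-1) * (p:ℤ)^i
            = (∑ i ∈ Finset.range k, (p:ℤ)^i) * ((p:ℤ)-1) := by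
              rw [Finset.sum_mul]; congr 1; ext i; ring
          _ = (p:ℤ)^k - 1 := this
      linarith
    have hβk' : β k ≤ (d:ℤ) - 1 := by linarith
    have hpk : (0:ℤ) ≤ (p:ℤ)^k := by positivity
    have h3 : β k * (p:ℤ)^k ≤ ((d:ℤ)-1) * (p:ℤ)^k :=
      mul_le_mul_of_nonneg_right hβk' hpk
    have h4 : (d:ℤ) * (∑ i ∈ Finset.range k, α i * (p:ℤ)^i) ≤ (d:ℤ) * ((p:ℤ)^k - 1) :=
      mul_le_mul_of_nonneg_left hsum (by positivity)
    have := hexp k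
    have hdZ : (1:ℤ) ≤ (d:ℤ) := by exact_mod_cast hd
    nlinarith
  have hdR : (0:ℝ) < (d:ℝ) := by exact_mod_cast hd
  have hcR : (0:ℝ) < (c:ℝ) := by exact_mod_cast hc
  have hp1 : (0:ℝ) < (p:ℝ) - 1 := by linarith
  have hpR0 : (0:ℝ) < (p:ℝ) := by linarith
  -- first part
  have part1 : ∀ k : ℕ, 1 ≤ k → k ≤ m → β k < (d : ℤ) →
      (c : ℝ) < 2 * (p : ℝ) * (d : ℝ) / ((p : ℝ) - 1) * (p : ℝ) ^ k := by
    intro k _ _ hβk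
    have h := key k hβk
    have hR : (c:ℝ) < 2 * (d:ℝ) * (p:ℝ)^k := by exact_mod_cast h
    have hle : 2 * (d:ℝ) * (p:ℝ)^k ≤ 2 * (p:ℝ) * (d:ℝ) / ((p:ℝ)-1) * (p:ℝ)^k := by
      rw [div_mul_eq_mul_div, le_div_iff₀ hp1]
      have hpk : (0:ℝ) < (p:ℝ)^k := by positivity
      nlinarith
    linarith
  refine ⟨part1, ?_⟩
  rintro ⟨k, hk1, hkm, hβk⟩
  -- from floor: p^m ≤ c(p-1)/(2dp), so 2 d p^m < c
  set x : ℝ := (c : ℝ) * ((p : ℝ) - 1) / (2 * (d : ℝ) * (p : ℝ)) with hx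
  have hx1 : (1:ℝ) < x := by
    rw [hx, lt_div_iff₀ (by positivity)]
    have : (2 * d * p : ℝ) < (c:ℝ) * ((p:ℝ) - 1) := by
      have := hbig
      have hcast : ((2 * d * p : ℕ) : ℝ) < ((c * (p-1) : ℕ) : ℝ) := by exact_mod_cast this
      push_cast at hcast
      have hp1' : (1:ℝ) ≤ (p:ℝ) := by linarith
      rw [Nat.cast_sub (by omega)] at hcast
      push_cast at hcast
      linarith
    linarith
  have hx0 : (0:ℝ) < x := by linarith
  have hlogp : 0 < Real.log (p:ℝ) := Real.log_pos (by linarith)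
  have hmle : (m:ℝ) ≤ Real.log x / Real.log (p:ℝ) := by
    have : ((m:ℤ):ℝ) ≤ Real.log x / Real.log (p:ℝ) := by
      rw [hm]; exact Int.floor_le _
    exact_mod_cast this
  have hlog : (m:ℝ) * Real.log (p:ℝ) ≤ Real.log x := by
    rw [le_div_iff₀ hlogp] at hmle; exact hmle
  have hpm : (p:ℝ)^m ≤ x := by
    have : Real.log ((p:ℝ)^m) ≤ Real.log x := by rw [Real.log_pow]; exact_mod_cast hlog
    exact (Real.log_le_log_iff (by positivity) hx0).mp this
  have h2dpm : 2 * (d:ℝ) * (p:ℝ)^m < (c:ℝ) := by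
    rw [hx, le_div_iff₀ (by positivity)] at hpm
    nlinarith [pow_pos hpR0 m]
  -- contradiction with c < 2 d p^k ≤ 2 d p^m
  have h := key k hβk
  have hR : (c:ℝ) < 2 * (d:ℝ) * (p:ℝ)^k := by exact_mod_cast h
  have hpow : (p:ℝ)^k ≤ (p:ℝ)^m := pow_le_pow_right₀ (by linarith) hkm
  nlinarith
end

section
/- For every i ≥ 0, |β_i| ≤ max(c, d); in particular the sequence (|β_i|) is bounded. -/
/-- For every i, |β_i| ≤ max(c, d); in particular (|β_i|) is bounded. -/
theorem stmt_19 (p : ℕ) (hp : p.Prime) (c d : ℕ) (hc : 0 < c) (hd : 0 < d)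
    (hcd : Nat.Coprime c d) (hcp : Nat.Coprime c p) (hdp : Nat.Coprime d p)
    (α β : ℕ → ℤ) (hβ0 : β 0 = (c : ℤ))
    (hα : ∀ i, 0 ≤ α i ∧ α i ≤ (p : ℤ) - 1 ∧ α i * (d : ℤ) ≡ β i [ZMOD (p : ℤ)])
    (hβ : ∀ i, (p : ℤ) * β (i + 1) = β i - α i * (d : ℤ)) :
    (∀ i : ℕ, |β i| ≤ max (c : ℤ) (d : ℤ)) ∧ ∃ B : ℤ, ∀ i : ℕ, |β i| ≤ B := by
  have hp1 : (1:ℤ) ≤ (p:ℤ) := by exact_mod_cast hp.one_lt.le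
  have hdmax : (d:ℤ) ≤ max (c:ℤ) (d:ℤ) := le_max_right _ _
  have hmain : ∀ i : ℕ, |β i| ≤ max (c : ℤ) (d : ℤ) := by
    intro i
    induction i with
    | zero =>
      rw [hβ0, abs_of_nonneg (by positivity)]
      exact le_max_left _ _
    | succ n ih =>
      obtain ⟨h0, h1, _⟩ := hα n
      have hd0 : (0:ℤ) ≤ (d:ℤ) := by positivity
      have hM0 : (0:ℤ) ≤ max (c:ℤ) (d:ℤ) := le_trans (abs_nonneg _) ih
      have key : (p:ℤ) * |β (n+1)| ≤ (p:ℤ) * max (c:ℤ) (d:ℤ) := by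
        calc (p:ℤ) * |β (n+1)| = |(p:ℤ) * β (n+1)| := by
              rw [abs_mul, abs_of_nonneg (show (0:ℤ) ≤ (p:ℤ) by positivity)]
          _ = |β n - α n * (d:ℤ)| := by rw [hβ n]
          _ ≤ |β n| + |α n * (d:ℤ)| := abs_sub _ _
          _ ≤ max (c:ℤ) (d:ℤ) + ((p:ℤ) - 1) * max (c:ℤ) (d:ℤ) := by
              have : |α n * (d:ℤ)| = α n * (d:ℤ) := abs_of_nonneg (by positivity)
              rw [this]
              have h2 : α n * (d:ℤ) ≤ ((p:ℤ) - 1) * max (c:ℤ) (d:ℤ) := by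
                calc α n * (d:ℤ) ≤ ((p:ℤ) - 1) * (d:ℤ) := by gcongr
                  _ ≤ ((p:ℤ) - 1) * max (c:ℤ) (d:ℤ) := by
                      have : (0:ℤ) ≤ (p:ℤ) - 1 := by linarith
                      gcongr
              linarith
          _ = (p:ℤ) * max (c:ℤ) (d:ℤ) := by ring
      exact le_of_mul_le_mul_left key (by positivity)
  exact ⟨hmain, ⟨max (c:ℤ) (d:ℤ), hmain⟩⟩
end
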